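/- If {(X_n, Y_n, Z_n)} is a stationary Markov chain of order at most k ≥ 1 and additionally the bivariate process {(Y_n, Z_n)} is Markov of order at most k, then the CCDI rate satisfies I(X→Y‖Z) = I(Y_0 ; X_{-k}^0 | Y_{-k}^{-1}, Z_{-k}^0). -/

import Mathlib

open MeasureTheory Real Filter Topology

namespace CCDI

variable {Ω : Type*} [MeasurableSpace Ω]

/-- The probability of an event as a real number. -/
noncomputable def pr (μ : Measure Ω) (s : Set Ω) : ℝ := (μ s).toReal

/-- Shannon entropy (natural log) of a finite-valued random variable. -/
noncomputable def entH {S : Type*} [Fintype S] (μ : Measure Ω) (X : Ω → S) : ℝ :=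
  -∑ s : S, pr μ (X ⁻¹' {s}) * Real.log (pr μ (X ⁻¹' {s}))

/-- Conditional Shannon entropy `H(X | Y) = H(X, Y) - H(Y)`. -/
noncomputable def condH {S T : Type*} [Fintype S] [Fintype T]
    (μ : Measure Ω) (X : Ω → S) (Y : Ω → T) : ℝ :=
  entH μ (fun ω => (X ω, Y ω)) - entH μ Y

/-- Conditional mutual information `I(X ; Y | Z) = H(X|Z) + H(Y|Z) - H(X,Y|Z)`. -/
noncomputable def cmi {S T U : Type*} [Fintype S] [Fintype T] [Fintype U]
    (μ : Measure Ω) (X : Ω → S) (Y : Ω → T) (Z : Ω → U) : ℝ :=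
  condH μ X Z + condH μ Y Z - condH μ (fun ω => (X ω, Y ω)) Z

/-- `X` and `Y` are conditionally independent given `Z`. -/
def CondIndep {S T U : Type*} (μ : Measure Ω) (X : Ω → S) (Y : Ω → T) (Z : Ω → U) : Prop :=
  ∀ (x : S) (y : T) (z : U),
    pr μ (X ⁻¹' {x} ∩ Y ⁻¹' {y} ∩ Z ⁻¹' {z}) * pr μ (Z ⁻¹' {z}) =
      pr μ (X ⁻¹' {x} ∩ Z ⁻¹' {z}) * pr μ (Y ⁻¹' {y} ∩ Z ⁻¹' {z})

/-- The block `X_1^m` of a process indexed by positive times. -/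
def blk1 {S : Type*} (X : ℕ → Ω → S) (m : ℕ) : Ω → Fin m → S :=
  fun ω j => X ((j : ℕ) + 1) ω

/-- The block `X_a^{a+m-1}` of a two-sided process. -/
def blkZ {S : Type*} (X : ℤ → Ω → S) (a : ℤ) (m : ℕ) : Ω → Fin m → S :=
  fun ω j => X (a + (j : ℕ)) ω

/-- Directed information `I(X_1^n → Y_1^n) = ∑_{i=1}^n I(X_1^i ; Y_i | Y_1^{i-1})`. -/
noncomputable def DI {A B : Type*} [Fintype A] [Fintype B]
    (μ : Measure Ω) (X : ℕ → Ω → A) (Y : ℕ → Ω → B) (n : ℕ) : ℝ :=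
  ∑ i ∈ Finset.range n, cmi μ (blk1 X (i + 1)) (Y (i + 1)) (blk1 Y i)

/-- Causal conditional directed information
`I(X_1^n → Y_1^n ‖ Z_1^n) = ∑_{i=1}^n I(X_1^i ; Y_i | Y_1^{i-1}, Z_1^i)`. -/
noncomputable def ccdi1 {A B C : Type*} [Fintype A] [Fintype B] [Fintype C]
    (μ : Measure Ω) (X : ℕ → Ω → A) (Y : ℕ → Ω → B) (Z : ℕ → Ω → C) (n : ℕ) : ℝ :=
  ∑ i ∈ Finset.range n,
    cmi μ (blk1 X (i + 1)) (Y (i + 1)) (fun ω => (blk1 Y i ω, blk1 Z (i + 1) ω))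

/-- CCDI for a two-sided process, over times `1,…,n`. -/
noncomputable def ccdiZ {A B C : Type*} [Fintype A] [Fintype B] [Fintype C]
    (μ : Measure Ω) (X : ℤ → Ω → A) (Y : ℤ → Ω → B) (Z : ℤ → Ω → C) (n : ℕ) : ℝ :=
  ∑ i ∈ Finset.range n,
    cmi μ (blkZ X 1 (i + 1)) (Y ((i : ℤ) + 1)) (fun ω => (blkZ Y 1 i ω, blkZ Z 1 (i + 1) ω))

/-- Stationarity of a (two-sided) process: the law of every finite window is
translation-invariant. -/
def Stationary {S : Type*} (μ : Measure Ω) (W : ℤ → Ω → S) : Prop :=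
  ∀ (m : ℕ) (t : ℤ) (w : Fin m → S),
    pr μ {ω | ∀ j : Fin m, W (t + (j : ℕ)) ω = w j} =
      pr μ {ω | ∀ j : Fin m, W ((j : ℕ) : ℤ) ω = w j}

/-- The process `W` is a Markov chain of order at most `k`: `W_n` is conditionally
independent of any block of the past before time `n-k`, given `W_{n-k}^{n-1}`. -/
def MarkovOrder {S : Type*} (μ : Measure Ω) (W : ℤ → Ω → S) (k : ℕ) : Prop :=
  ∀ (n : ℤ) (m : ℕ),
    CondIndep μ (W n) (fun ω (j : Fin m) => W (n - (k : ℤ) - (m : ℤ) + (j : ℕ)) ω)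
      (fun ω (j : Fin k) => W (n - (k : ℤ) + (j : ℕ)) ω)

/-- The empirical (uniform) measure on sample indices `{0,…,n-1}`. -/
noncomputable def empμ (n : ℕ) : Measure (Fin n) := ((n : ENNReal))⁻¹ • Measure.count

/-- The plug-in estimator `Î_n^{(k)}(X → Y ‖ Z)` computed from a sample path:
the conditional mutual information `I(Y_0 ; X_{-k}^0 | Y_{-k}^{-1}, Z_{-k}^0)` under the
empirical distribution of the overlapping `(k+1)`-blocks at times `1,…,n`. -/
noncomputable def plugIn {A B C : Type*} [Fintype A] [Fintype B] [Fintype C]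
    (k n : ℕ) (x : ℤ → A) (y : ℤ → B) (z : ℤ → C) : ℝ :=
  cmi (empμ n) (fun i : Fin n => y ((i : ℤ) + 1))
    (fun (i : Fin n) (j : Fin (k + 1)) => x ((i : ℤ) + 1 - (k : ℤ) + (j : ℕ)))
    (fun i : Fin n =>
      ((fun j : Fin k => y ((i : ℤ) + 1 - (k : ℤ) + (j : ℕ))),
       (fun j : Fin (k + 1) => z ((i : ℤ) + 1 - (k : ℤ) + (j : ℕ)))))

/-- The plug-in estimator evaluated on the sample path of the processes at `ω`. -/
noncomputable def plugInP {A B C : Type*} [Fintype A] [Fintype B] [Fintype C]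
    (k n : ℕ) (X : ℤ → Ω → A) (Y : ℤ → Ω → B) (Z : ℤ → Ω → C) (ω : Ω) : ℝ :=
  plugIn k n (fun t => X t ω) (fun t => Y t ω) (fun t => Z t ω)

/-- The probability mass function of `f` under `μ`. -/
noncomputable def pmfOf {S : Type*} (μ : Measure Ω) (f : Ω → S) : S → ℝ :=
  fun s => pr μ (f ⁻¹' {s})

/-- Relative entropy (KL divergence) between two pmfs on a finite set. -/
noncomputable def Dkl {S : Type*} [Fintype S] (P Q : S → ℝ) : ℝ :=
  ∑ s : S, P s * Real.log (P s / Q s)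

/-- Shannon entropy of a pmf on a finite set. -/
noncomputable def entP {S : Type*} [Fintype S] (P : S → ℝ) : ℝ :=
  -∑ s : S, P s * Real.log (P s)

/-- The process `W` is time-homogeneous with `k`-th order transition function `Q`. -/
def HomMarkov {S : Type*} (μ : Measure Ω) (W : ℤ → Ω → S) (k : ℕ)
    (Q : (Fin k → S) → S → ℝ) : Prop :=
  ∀ (n : ℤ) (w : Fin k → S) (s : S),
    pr μ ({ω | ∀ j : Fin k, W (n - (k : ℤ) + (j : ℕ)) ω = w j} ∩ {ω | W n ω = s}) =
      Q w s * pr μ {ω | ∀ j : Fin k, W (n - (k : ℤ) + (j : ℕ)) ω = w j}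

open scoped Classical in
/-- The transition matrix of the lifted (first order) chain of `k`-blocks induced by a
`k`-th order transition function `Q`. -/
noncomputable def Qlift {S : Type*} (k : ℕ) (Q : (Fin k → S) → S → ℝ) :
    Matrix (Fin k → S) (Fin k → S) ℝ :=
  fun u v =>
    if h : (∀ (i : Fin k) (hi : (i : ℕ) + 1 < k), v i = u ⟨(i : ℕ) + 1, hi⟩) ∧ 0 < k then
      Q u (v ⟨k - 1, Nat.sub_lt h.2 Nat.one_pos⟩)
    else 0

/-- Irreducibility and aperiodicity of a `k`-th order transition function, expressed as
primitivity of the lifted block-transition matrix. -/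
def Primitive {S : Type*} [Fintype S] [DecidableEq S] (k : ℕ)
    (Q : (Fin k → S) → S → ℝ) : Prop :=
  ∃ N : ℕ, ∀ u v : Fin k → S, 0 < (Qlift k Q ^ N) u v



section Infra

variable {Ω : Type*} [MeasurableSpace Ω] {μ : Measure Ω}

/-- All fibers (preimages of singletons) of `f` are measurable. -/
def FM {S : Type*} (f : Ω → S) : Prop := ∀ s : S, MeasurableSet (f ⁻¹' {s})

lemma fm_of_measurable {S : Type*} [MeasurableSpace S] [MeasurableSingletonClass S]
    {f : Ω → S} (hf : Measurable f) : FM f := fun s => hf (measurableSet_singleton s)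

lemma preimage_pair_singleton {S T : Type*} (f : Ω → S) (g : Ω → T) (a : S) (b : T) :
    (fun ω => (f ω, g ω)) ⁻¹' {(a, b)} = f ⁻¹' {a} ∩ g ⁻¹' {b} := by
  ext ω; simp [Prod.ext_iff]

lemma fm_pair {S T : Type*} {f : Ω → S} {g : Ω → T} (hf : FM f) (hg : FM g) :
    FM (fun ω => (f ω, g ω)) := by
  rintro ⟨a, b⟩
  rw [preimage_pair_singleton]
  exact (hf a).inter (hg b)

lemma fm_pi {S : Type*} {m : ℕ} {f : Fin m → Ω → S} (hf : ∀ j, FM (f j)) :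
    FM (fun ω (j : Fin m) => f j ω) := by
  intro w
  have h : (fun ω (j : Fin m) => f j ω) ⁻¹' {w} = ⋂ j : Fin m, (f j) ⁻¹' {w j} := by
    ext ω; simp [funext_iff]
  rw [h]; exact MeasurableSet.iInter fun j => hf j (w j)

lemma pr_nonneg (s : Set Ω) : 0 ≤ pr μ s := ENNReal.toReal_nonneg

lemma pr_empty : pr μ (∅ : Set Ω) = 0 := by simp [pr]

lemma pr_mono [IsFiniteMeasure μ] {s t : Set Ω} (h : s ⊆ t) : pr μ s ≤ pr μ t :=
  ENNReal.toReal_mono (measure_ne_top μ t) (measure_mono h)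

lemma sum_pr_fiber {S : Type*} [Fintype S] [IsFiniteMeasure μ] {F : Ω → S} (hF : FM F)
    {E : Set Ω} (hE : MeasurableSet E) :
    ∑ s : S, pr μ (F ⁻¹' {s} ∩ E) = pr μ E := by
  classical
  have hdis : Pairwise (Function.onFun Disjoint fun s : S => F ⁻¹' {s} ∩ E) := by
    intro s t hst
    refine Set.disjoint_left.2 fun ω h1 h2 => hst ?_
    have e1 : F ω = s := h1.1
    have e2 : F ω = t := h2.1
    rw [← e1, e2]
  have hU : (⋃ s : S, F ⁻¹' {s} ∩ E) = E := by ext ω; simp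
  have hmeas := measure_iUnion (μ := μ) hdis (fun s => (hF s).inter hE)
  have hsum : μ E = ∑ s : S, μ (F ⁻¹' {s} ∩ E) := by
    conv_lhs => rw [← hU]
    rw [hmeas, tsum_fintype]
  unfold pr
  rw [hsum, ENNReal.toReal_sum]
  intro s _
  exact ((measure_mono (Set.inter_subset_right)).trans_lt (measure_lt_top μ E)).ne

lemma fm_comp {S T : Type*} [Fintype S] {F : Ω → S} (hF : FM F) (g : S → T) :
    FM (fun ω => g (F ω)) := by
  classical
  intro t
  have h : (fun ω => g (F ω)) ⁻¹' {t} =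
      ⋃ s ∈ Finset.univ.filter (fun s => g s = t), F ⁻¹' {s} := by
    ext ω; simp
  rw [h]
  exact (Finset.univ.filter (fun s => g s = t)).measurableSet_biUnion fun s _ => hF s

lemma pr_preimage_comp {S T : Type*} [Fintype S] [DecidableEq T] [IsFiniteMeasure μ] {F : Ω → S}
    (hF : FM F) (g : S → T) (t : T) :
    pr μ ((fun ω => g (F ω)) ⁻¹' {t}) =
      ∑ s : S, (if g s = t then pr μ (F ⁻¹' {s}) else 0) := by
  classical
  have hE : MeasurableSet ((fun ω => g (F ω)) ⁻¹' {t}) := fm_comp hF g t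
  rw [← sum_pr_fiber hF hE]
  refine Finset.sum_congr rfl fun s _ => ?_
  by_cases h : g s = t
  · rw [if_pos h]
    congr 1
    ext ω
    simp only [Set.mem_inter_iff, Set.mem_preimage, Set.mem_singleton_iff]
    exact ⟨fun hh => hh.1, fun hh => ⟨hh, by rw [hh, h]⟩⟩
  · rw [if_neg h]
    have : F ⁻¹' {s} ∩ (fun ω => g (F ω)) ⁻¹' {t} = ∅ := by
      ext ω
      simp only [Set.mem_inter_iff, Set.mem_preimage, Set.mem_singleton_iff,
        Set.mem_empty_iff_false, iff_false, not_and]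
      intro hs ht; exact h (by rw [← hs]; exact ht)
    rw [this, pr_empty]

lemma entH_transfer {S T : Type*} [Fintype S] [Fintype T] [DecidableEq T] [IsFiniteMeasure μ]
    {F F' : Ω → S} (hF : FM F) (hF' : FM F')
    (hp : ∀ s, pr μ (F ⁻¹' {s}) = pr μ (F' ⁻¹' {s})) (g : S → T) :
    entH μ (fun ω => g (F ω)) = entH μ (fun ω => g (F' ω)) := by
  classical
  unfold entH
  congr 1
  refine Finset.sum_congr rfl fun t _ => ?_
  rw [pr_preimage_comp hF g t, pr_preimage_comp hF' g t]
  congr 1 <;> [skip; congr 1] <;>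
    exact Finset.sum_congr rfl fun s _ => by by_cases h : g s = t <;> simp [h, hp s]

lemma entH_eq_of_inv {S T : Type*} [Fintype S] [Fintype T]
    {F : Ω → S} {G : Ω → T} (u : S → T) (v : T → S)
    (hu : ∀ ω, G ω = u (F ω)) (hv : ∀ ω, F ω = v (G ω)) :
    entH μ F = entH μ G := by
  classical
  unfold entH
  congr 1
  have fibG : ∀ t : T, (G ⁻¹' {t}).Nonempty → G ⁻¹' {t} = F ⁻¹' {v t} := by
    rintro t ⟨ω0, hω0⟩
    have hω0' : G ω0 = t := hω0
    ext ω
    simp only [Set.mem_preimage, Set.mem_singleton_iff]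
    constructor
    · intro h; rw [hv ω, h]
    · intro h
      have h1 : v t = F ω0 := by rw [hv ω0, hω0']
      rw [hu ω, h, h1, ← hu ω0, hω0']
  have fibF : ∀ s : S, (F ⁻¹' {s}).Nonempty → F ⁻¹' {s} = G ⁻¹' {u s} := by
    rintro s ⟨ω0, hω0⟩
    have hω0' : F ω0 = s := hω0
    ext ω
    simp only [Set.mem_preimage, Set.mem_singleton_iff]
    constructor
    · intro h; rw [hu ω, h]
    · intro h
      have h1 : u s = G ω0 := by rw [hu ω0, hω0']
      rw [hv ω, h, h1, ← hv ω0, hω0']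
  rw [← Finset.sum_filter_add_sum_filter_not Finset.univ
      (fun s : S => (F ⁻¹' {s}).Nonempty),
      ← Finset.sum_filter_add_sum_filter_not Finset.univ
      (fun t : T => (G ⁻¹' {t}).Nonempty)]
  have z1 : ∑ s ∈ Finset.univ.filter (fun s : S => ¬ (F ⁻¹' {s}).Nonempty),
      pr μ (F ⁻¹' {s}) * Real.log (pr μ (F ⁻¹' {s})) = 0 := by
    refine Finset.sum_eq_zero fun s hs => ?_
    rw [Finset.mem_filter] at hs
    rw [Set.not_nonempty_iff_eq_empty.1 hs.2, pr_empty, zero_mul]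
  have z2 : ∑ t ∈ Finset.univ.filter (fun t : T => ¬ (G ⁻¹' {t}).Nonempty),
      pr μ (G ⁻¹' {t}) * Real.log (pr μ (G ⁻¹' {t})) = 0 := by
    refine Finset.sum_eq_zero fun t ht => ?_
    rw [Finset.mem_filter] at ht
    rw [Set.not_nonempty_iff_eq_empty.1 ht.2, pr_empty, zero_mul]
  rw [z1, z2, add_zero, add_zero]
  refine Finset.sum_nbij' (fun s => u s) (fun t => v t) ?_ ?_ ?_ ?_ ?_
  · intro s hs
    rw [Finset.mem_filter] at hs ⊢
    obtain ⟨ω0, hω0⟩ := hs.2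
    exact ⟨Finset.mem_univ _, ⟨ω0, by simp only [Set.mem_preimage, Set.mem_singleton_iff] at hω0 ⊢; rw [hu ω0, hω0]⟩⟩
  · intro t ht
    rw [Finset.mem_filter] at ht ⊢
    obtain ⟨ω0, hω0⟩ := ht.2
    exact ⟨Finset.mem_univ _, ⟨ω0, by simp only [Set.mem_preimage, Set.mem_singleton_iff] at hω0 ⊢; rw [hv ω0, hω0]⟩⟩
  · intro s hs
    rw [Finset.mem_filter] at hs
    obtain ⟨ω0, hω0⟩ := hs.2
    simp only [Set.mem_preimage, Set.mem_singleton_iff] at hω0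
    show v (u s) = s
    rw [← hω0, ← hu ω0, ← hv ω0]
  · intro t ht
    rw [Finset.mem_filter] at ht
    obtain ⟨ω0, hω0⟩ := ht.2
    simp only [Set.mem_preimage, Set.mem_singleton_iff] at hω0
    show u (v t) = t
    rw [← hω0, ← hv ω0, ← hu ω0]
  · intro s hs
    rw [Finset.mem_filter] at hs
    have h1 : F ⁻¹' {s} = G ⁻¹' {u s} := fibF s hs.2
    rw [h1]

end Infra


section CI

variable {Ω : Type*} [MeasurableSpace Ω] {μ : Measure Ω}

lemma condIndep_left_inv {S S' T U : Type*} {A : Ω → S} {A' : Ω → S'} {B : Ω → T} {Cf : Ω → U}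
    (u : S → S') (v : S' → S) (hu : ∀ ω, A' ω = u (A ω)) (hv : ∀ ω, A ω = v (A' ω))
    (h : CondIndep μ A B Cf) : CondIndep μ A' B Cf := by
  intro x' y z
  by_cases hne : (A' ⁻¹' {x'}).Nonempty
  · obtain ⟨ω0, hω0⟩ := hne
    simp only [Set.mem_preimage, Set.mem_singleton_iff] at hω0
    have hfib : A' ⁻¹' {x'} = A ⁻¹' {v x'} := by
      ext ω
      simp only [Set.mem_preimage, Set.mem_singleton_iff]
      constructor
      · intro hh; rw [hv ω, hh]
      · intro hh
        have h1 : v x' = A ω0 := by rw [hv ω0, hω0]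
        rw [hu ω, hh, h1, ← hu ω0, hω0]
    rw [hfib]; exact h (v x') y z
  · rw [Set.not_nonempty_iff_eq_empty.1 hne]
    simp [pr_empty]

lemma condIndep_weakUnion {S1 S2 T U : Type*} [Fintype S1] [IsFiniteMeasure μ]
    {A1 : Ω → S1} {A2 : Ω → S2} {B : Ω → T} {Cf : Ω → U}
    (hA1 : FM A1) (hA2 : FM A2) (hB : FM B) (hC : FM Cf)
    (h : CondIndep μ (fun ω => (A1 ω, A2 ω)) B Cf) :
    CondIndep μ A1 B (fun ω => (A2 ω, Cf ω)) := by
  classical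
  rintro a1 b ⟨a2, c⟩
  rw [preimage_pair_singleton]
  have key : ∀ a1' : S1,
      pr μ (A1 ⁻¹' {a1'} ∩ (A2 ⁻¹' {a2} ∩ B ⁻¹' {b} ∩ Cf ⁻¹' {c})) * pr μ (Cf ⁻¹' {c}) =
        pr μ (A1 ⁻¹' {a1'} ∩ (A2 ⁻¹' {a2} ∩ Cf ⁻¹' {c})) * pr μ (B ⁻¹' {b} ∩ Cf ⁻¹' {c}) := by
    intro a1'
    have hg := h (a1', a2) b c
    rw [preimage_pair_singleton] at hg
    have e1 : A1 ⁻¹' {a1'} ∩ A2 ⁻¹' {a2} ∩ B ⁻¹' {b} ∩ Cf ⁻¹' {c}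
        = A1 ⁻¹' {a1'} ∩ (A2 ⁻¹' {a2} ∩ B ⁻¹' {b} ∩ Cf ⁻¹' {c}) := by
      ext ω; simp only [Set.mem_inter_iff]; tauto
    have e2 : A1 ⁻¹' {a1'} ∩ A2 ⁻¹' {a2} ∩ Cf ⁻¹' {c}
        = A1 ⁻¹' {a1'} ∩ (A2 ⁻¹' {a2} ∩ Cf ⁻¹' {c}) := by
      ext ω; simp only [Set.mem_inter_iff]; tauto
    rw [e1, e2] at hg
    exact hg
  have m1 : MeasurableSet (A2 ⁻¹' {a2} ∩ B ⁻¹' {b} ∩ Cf ⁻¹' {c}) :=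
    ((hA2 a2).inter (hB b)).inter (hC c)
  have m2 : MeasurableSet (A2 ⁻¹' {a2} ∩ Cf ⁻¹' {c}) := (hA2 a2).inter (hC c)
  have hmarg : pr μ (A2 ⁻¹' {a2} ∩ B ⁻¹' {b} ∩ Cf ⁻¹' {c}) * pr μ (Cf ⁻¹' {c})
      = pr μ (A2 ⁻¹' {a2} ∩ Cf ⁻¹' {c}) * pr μ (B ⁻¹' {b} ∩ Cf ⁻¹' {c}) := by
    calc pr μ (A2 ⁻¹' {a2} ∩ B ⁻¹' {b} ∩ Cf ⁻¹' {c}) * pr μ (Cf ⁻¹' {c})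
        = (∑ a1' : S1, pr μ (A1 ⁻¹' {a1'} ∩ (A2 ⁻¹' {a2} ∩ B ⁻¹' {b} ∩ Cf ⁻¹' {c})))
            * pr μ (Cf ⁻¹' {c}) := by rw [sum_pr_fiber hA1 m1]
      _ = ∑ a1' : S1, pr μ (A1 ⁻¹' {a1'} ∩ (A2 ⁻¹' {a2} ∩ B ⁻¹' {b} ∩ Cf ⁻¹' {c}))
            * pr μ (Cf ⁻¹' {c}) := by rw [Finset.sum_mul]
      _ = ∑ a1' : S1, pr μ (A1 ⁻¹' {a1'} ∩ (A2 ⁻¹' {a2} ∩ Cf ⁻¹' {c}))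
            * pr μ (B ⁻¹' {b} ∩ Cf ⁻¹' {c}) := Finset.sum_congr rfl fun a1' _ => key a1'
      _ = (∑ a1' : S1, pr μ (A1 ⁻¹' {a1'} ∩ (A2 ⁻¹' {a2} ∩ Cf ⁻¹' {c})))
            * pr μ (B ⁻¹' {b} ∩ Cf ⁻¹' {c}) := by rw [Finset.sum_mul]
      _ = pr μ (A2 ⁻¹' {a2} ∩ Cf ⁻¹' {c}) * pr μ (B ⁻¹' {b} ∩ Cf ⁻¹' {c}) := by
            rw [sum_pr_fiber hA1 m2]
  have e3 : A1 ⁻¹' {a1} ∩ B ⁻¹' {b} ∩ (A2 ⁻¹' {a2} ∩ Cf ⁻¹' {c})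
      = A1 ⁻¹' {a1} ∩ (A2 ⁻¹' {a2} ∩ B ⁻¹' {b} ∩ Cf ⁻¹' {c}) := by
    ext ω; simp only [Set.mem_inter_iff]; tauto
  have e5 : B ⁻¹' {b} ∩ (A2 ⁻¹' {a2} ∩ Cf ⁻¹' {c})
      = A2 ⁻¹' {a2} ∩ B ⁻¹' {b} ∩ Cf ⁻¹' {c} := by
    ext ω; simp only [Set.mem_inter_iff]; tauto
  rw [e3, e5]
  by_cases hc0 : pr μ (Cf ⁻¹' {c}) = 0
  · have z1 : pr μ (A2 ⁻¹' {a2} ∩ Cf ⁻¹' {c}) = 0 :=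
      le_antisymm (hc0 ▸ pr_mono Set.inter_subset_right) (pr_nonneg _)
    have z2 : pr μ (A2 ⁻¹' {a2} ∩ B ⁻¹' {b} ∩ Cf ⁻¹' {c}) = 0 :=
      le_antisymm (hc0 ▸ pr_mono Set.inter_subset_right) (pr_nonneg _)
    rw [z1, z2, mul_zero, mul_zero]
  · apply mul_right_cancel₀ hc0
    calc pr μ (A1 ⁻¹' {a1} ∩ (A2 ⁻¹' {a2} ∩ B ⁻¹' {b} ∩ Cf ⁻¹' {c}))
          * pr μ (A2 ⁻¹' {a2} ∩ Cf ⁻¹' {c}) * pr μ (Cf ⁻¹' {c})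
        = (pr μ (A1 ⁻¹' {a1} ∩ (A2 ⁻¹' {a2} ∩ B ⁻¹' {b} ∩ Cf ⁻¹' {c})) * pr μ (Cf ⁻¹' {c}))
            * pr μ (A2 ⁻¹' {a2} ∩ Cf ⁻¹' {c}) := by ring
      _ = (pr μ (A1 ⁻¹' {a1} ∩ (A2 ⁻¹' {a2} ∩ Cf ⁻¹' {c})) * pr μ (B ⁻¹' {b} ∩ Cf ⁻¹' {c}))
            * pr μ (A2 ⁻¹' {a2} ∩ Cf ⁻¹' {c}) := by rw [key a1]
      _ = pr μ (A1 ⁻¹' {a1} ∩ (A2 ⁻¹' {a2} ∩ Cf ⁻¹' {c}))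
            * (pr μ (A2 ⁻¹' {a2} ∩ Cf ⁻¹' {c}) * pr μ (B ⁻¹' {b} ∩ Cf ⁻¹' {c})) := by ring
      _ = pr μ (A1 ⁻¹' {a1} ∩ (A2 ⁻¹' {a2} ∩ Cf ⁻¹' {c}))
            * (pr μ (A2 ⁻¹' {a2} ∩ B ⁻¹' {b} ∩ Cf ⁻¹' {c}) * pr μ (Cf ⁻¹' {c})) := by
            rw [← hmarg]
      _ = pr μ (A1 ⁻¹' {a1} ∩ (A2 ⁻¹' {a2} ∩ Cf ⁻¹' {c}))
            * pr μ (A2 ⁻¹' {a2} ∩ B ⁻¹' {b} ∩ Cf ⁻¹' {c}) * pr μ (Cf ⁻¹' {c}) := by ring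

lemma entH_drop {S T U : Type*} [Fintype S] [Fintype T] [Fintype U] [IsFiniteMeasure μ]
    {A : Ω → S} {B : Ω → T} {Cf : Ω → U}
    (hA : FM A) (hB : FM B) (hC : FM Cf)
    (h : CondIndep μ A B Cf) :
    entH μ (fun ω => (A ω, B ω, Cf ω)) + entH μ Cf
      = entH μ (fun ω => (A ω, Cf ω)) + entH μ (fun ω => (B ω, Cf ω)) := by
  classical
  set f : S → T → U → ℝ :=
    fun a b c => pr μ (A ⁻¹' {a} ∩ B ⁻¹' {b} ∩ Cf ⁻¹' {c}) with hfdef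
  set pac : S → U → ℝ := fun a c => pr μ (A ⁻¹' {a} ∩ Cf ⁻¹' {c}) with hpacdef
  set pbc : T → U → ℝ := fun b c => pr μ (B ⁻¹' {b} ∩ Cf ⁻¹' {c}) with hpbcdef
  set pc : U → ℝ := fun c => pr μ (Cf ⁻¹' {c}) with hpcdef
  have pre3 : ∀ (a : S) (b : T) (c : U),
      (fun ω => (A ω, B ω, Cf ω)) ⁻¹' {(a, b, c)}
        = A ⁻¹' {a} ∩ B ⁻¹' {b} ∩ Cf ⁻¹' {c} := by
    intro a b c; ext ω
    simp only [Set.mem_preimage, Set.mem_singleton_iff, Prod.mk.injEq, Set.mem_inter_iff]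
    tauto
  have e3 : entH μ (fun ω => (A ω, B ω, Cf ω))
      = -∑ a : S, ∑ b : T, ∑ c : U, f a b c * Real.log (f a b c) := by
    unfold entH
    rw [Fintype.sum_prod_type]
    congr 1
    refine Finset.sum_congr rfl fun a _ => ?_
    rw [Fintype.sum_prod_type]
    refine Finset.sum_congr rfl fun b _ => Finset.sum_congr rfl fun c _ => ?_
    rw [pre3]
  have eac : entH μ (fun ω => (A ω, Cf ω))
      = -∑ a : S, ∑ c : U, pac a c * Real.log (pac a c) := by
    unfold entH
    rw [Fintype.sum_prod_type]
    congr 1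
    refine Finset.sum_congr rfl fun a _ => Finset.sum_congr rfl fun c _ => ?_
    rw [preimage_pair_singleton]
  have ebc : entH μ (fun ω => (B ω, Cf ω))
      = -∑ b : T, ∑ c : U, pbc b c * Real.log (pbc b c) := by
    unfold entH
    rw [Fintype.sum_prod_type]
    congr 1
    refine Finset.sum_congr rfl fun b _ => Finset.sum_congr rfl fun c _ => ?_
    rw [preimage_pair_singleton]
  have ec : entH μ Cf = -∑ c : U, pc c * Real.log (pc c) := rfl
  have hs_ac : ∀ (a : S) (c : U), ∑ b : T, f a b c = pac a c := by
    intro a c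
    have e : ∀ b : T, A ⁻¹' {a} ∩ B ⁻¹' {b} ∩ Cf ⁻¹' {c}
        = B ⁻¹' {b} ∩ (A ⁻¹' {a} ∩ Cf ⁻¹' {c}) := by
      intro b; ext ω; simp only [Set.mem_inter_iff]; tauto
    calc ∑ b : T, f a b c = ∑ b : T, pr μ (B ⁻¹' {b} ∩ (A ⁻¹' {a} ∩ Cf ⁻¹' {c})) :=
          Finset.sum_congr rfl fun b _ => by
            show pr μ (A ⁻¹' {a} ∩ B ⁻¹' {b} ∩ Cf ⁻¹' {c}) = _
            rw [e b]
      _ = pac a c := sum_pr_fiber hB ((hA a).inter (hC c))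
  have hs_bc : ∀ (b : T) (c : U), ∑ a : S, f a b c = pbc b c := by
    intro b c
    have e : ∀ a : S, A ⁻¹' {a} ∩ B ⁻¹' {b} ∩ Cf ⁻¹' {c}
        = A ⁻¹' {a} ∩ (B ⁻¹' {b} ∩ Cf ⁻¹' {c}) := by
      intro a; ext ω; simp only [Set.mem_inter_iff]; tauto
    calc ∑ a : S, f a b c = ∑ a : S, pr μ (A ⁻¹' {a} ∩ (B ⁻¹' {b} ∩ Cf ⁻¹' {c})) :=
          Finset.sum_congr rfl fun a _ => by
            show pr μ (A ⁻¹' {a} ∩ B ⁻¹' {b} ∩ Cf ⁻¹' {c}) = _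
            rw [e a]
      _ = pbc b c := sum_pr_fiber hA ((hB b).inter (hC c))
  have hs_c : ∀ c : U, ∑ a : S, pac a c = pc c := fun c => sum_pr_fiber hA (hC c)
  have step1 : ∑ a : S, ∑ b : T, ∑ c : U, f a b c * Real.log (f a b c)
      = ∑ a : S, ∑ b : T, ∑ c : U, f a b c *
          (Real.log (pac a c) + Real.log (pbc b c) - Real.log (pc c)) := by
    refine Finset.sum_congr rfl fun a _ => Finset.sum_congr rfl fun b _ =>
      Finset.sum_congr rfl fun c _ => ?_
    by_cases h0 : f a b c = 0
    · rw [h0, zero_mul, zero_mul]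
    · have hfpos : 0 < f a b c := lt_of_le_of_ne (pr_nonneg _) (Ne.symm h0)
      have hle_pc : f a b c ≤ pc c := pr_mono Set.inter_subset_right
      have hle_pac : f a b c ≤ pac a c :=
        pr_mono fun ω hh => ⟨hh.1.1, hh.2⟩
      have hle_pbc : f a b c ≤ pbc b c :=
        pr_mono fun ω hh => ⟨hh.1.2, hh.2⟩
      have hpc : 0 < pc c := lt_of_lt_of_le hfpos hle_pc
      have hpac : 0 < pac a c := lt_of_lt_of_le hfpos hle_pac
      have hpbc : 0 < pbc b c := lt_of_lt_of_le hfpos hle_pbc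
      have heq : f a b c * pc c = pac a c * pbc b c := h a b c
      have hval : f a b c = pac a c * pbc b c / pc c := by
        rw [eq_div_iff hpc.ne']; exact heq
      rw [show Real.log (f a b c)
          = Real.log (pac a c) + Real.log (pbc b c) - Real.log (pc c) by
        rw [hval, Real.log_div (mul_ne_zero hpac.ne' hpbc.ne') hpc.ne',
          Real.log_mul hpac.ne' hpbc.ne']]
  have step2 : ∑ a : S, ∑ b : T, ∑ c : U, f a b c * Real.log (pac a c)
      = ∑ a : S, ∑ c : U, pac a c * Real.log (pac a c) := by
    refine Finset.sum_congr rfl fun a _ => ?_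
    rw [Finset.sum_comm]
    refine Finset.sum_congr rfl fun c _ => ?_
    rw [← Finset.sum_mul, hs_ac]
  have step3 : ∑ a : S, ∑ b : T, ∑ c : U, f a b c * Real.log (pbc b c)
      = ∑ b : T, ∑ c : U, pbc b c * Real.log (pbc b c) := by
    rw [Finset.sum_comm]
    refine Finset.sum_congr rfl fun b _ => ?_
    rw [Finset.sum_comm]
    refine Finset.sum_congr rfl fun c _ => ?_
    rw [← Finset.sum_mul, hs_bc]
  have step4 : ∑ a : S, ∑ b : T, ∑ c : U, f a b c * Real.log (pc c)
      = ∑ c : U, pc c * Real.log (pc c) := by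
    have h1 : ∀ a : S, ∑ b : T, ∑ c : U, f a b c * Real.log (pc c)
        = ∑ c : U, pac a c * Real.log (pc c) := by
      intro a
      rw [Finset.sum_comm]
      refine Finset.sum_congr rfl fun c _ => ?_
      rw [← Finset.sum_mul, hs_ac]
    calc ∑ a : S, ∑ b : T, ∑ c : U, f a b c * Real.log (pc c)
        = ∑ a : S, ∑ c : U, pac a c * Real.log (pc c) :=
          Finset.sum_congr rfl fun a _ => h1 a
      _ = ∑ c : U, ∑ a : S, pac a c * Real.log (pc c) := Finset.sum_comm
      _ = ∑ c : U, pc c * Real.log (pc c) := by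
          refine Finset.sum_congr rfl fun c _ => ?_
          rw [← Finset.sum_mul, hs_c]
  have expand : ∑ a : S, ∑ b : T, ∑ c : U, f a b c *
      (Real.log (pac a c) + Real.log (pbc b c) - Real.log (pc c))
      = (∑ a : S, ∑ b : T, ∑ c : U, f a b c * Real.log (pac a c))
        + (∑ a : S, ∑ b : T, ∑ c : U, f a b c * Real.log (pbc b c))
        - (∑ a : S, ∑ b : T, ∑ c : U, f a b c * Real.log (pc c)) := by
    simp only [mul_add, mul_sub, Finset.sum_add_distrib, Finset.sum_sub_distrib]
  rw [e3, eac, ebc, ec]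
  have final := step1.trans (expand.trans (by rw [step2, step3, step4]))
  linarith [final]

end CI


section TermEq

lemma appc {Ω α : Type*} (f : ℤ → Ω → α) {s t : ℤ} (h : s = t) (ω : Ω) : f s ω = f t ω := by
  rw [h]

lemma termEq
    {Ω A B C : Type*} [MeasurableSpace Ω]
    [MeasurableSpace A] [MeasurableSpace B] [MeasurableSpace C]
    [Fintype A] [Fintype B] [Fintype C]
    [MeasurableSingletonClass A] [MeasurableSingletonClass B] [MeasurableSingletonClass C]
    (μ : Measure Ω) [IsProbabilityMeasure μ]
    (X : ℤ → Ω → A) (Y : ℤ → Ω → B) (Z : ℤ → Ω → C)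
    (hX : ∀ t, Measurable (X t)) (hY : ∀ t, Measurable (Y t)) (hZ : ∀ t, Measurable (Z t))
    (k : ℕ)
    (hstat : Stationary μ (fun t ω => (X t ω, Y t ω, Z t ω)))
    (hM : MarkovOrder μ (fun t ω => (X t ω, Y t ω, Z t ω)) k)
    (hYZ : MarkovOrder μ (fun t ω => (Y t ω, Z t ω)) k)
    (i : ℕ) (hik : k ≤ i) :
    cmi μ (blkZ X 1 (i + 1)) (Y ((i : ℤ) + 1)) (fun ω => (blkZ Y 1 i ω, blkZ Z 1 (i + 1) ω))
      = cmi μ (Y 0) (blkZ X (-(k : ℤ)) (k + 1))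
          (fun ω => (blkZ Y (-(k : ℤ)) k ω, blkZ Z (-(k : ℤ)) (k + 1) ω)) := by
  classical
  obtain ⟨p, rfl⟩ : ∃ p, i = p + k := ⟨i - k, by omega⟩
  -- measurability of the various finite-valued maps
  have fmX : ∀ t, FM (X t) := fun t => fm_of_measurable (hX t)
  have fmY : ∀ t, FM (Y t) := fun t => fm_of_measurable (hY t)
  have fmZ : ∀ t, FM (Z t) := fun t => fm_of_measurable (hZ t)
  have fmBpW : FM (fun ω (j : Fin p) => (X (1 + ((j : ℕ) : ℤ)) ω, Y (1 + ((j : ℕ) : ℤ)) ω, Z (1 + ((j : ℕ) : ℤ)) ω)) := fm_pi (fun j => fm_pair (fmX _) (fm_pair (fmY _) (fmZ _)))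
  have fmCmW : FM (fun ω (j : Fin k) => (X ((p : ℤ) + 1 + ((j : ℕ) : ℤ)) ω, Y ((p : ℤ) + 1 + ((j : ℕ) : ℤ)) ω, Z ((p : ℤ) + 1 + ((j : ℕ) : ℤ)) ω)) := fm_pi (fun j => fm_pair (fmX _) (fm_pair (fmY _) (fmZ _)))
  have fmBpV : FM (fun ω (j : Fin p) => (Y (1 + ((j : ℕ) : ℤ)) ω, Z (1 + ((j : ℕ) : ℤ)) ω)) := fm_pi (fun j => fm_pair (fmY _) (fmZ _))
  have fmCmV : FM (fun ω (j : Fin k) => (Y ((p : ℤ) + 1 + ((j : ℕ) : ℤ)) ω, Z ((p : ℤ) + 1 + ((j : ℕ) : ℤ)) ω)) := fm_pi (fun j => fm_pair (fmY _) (fmZ _))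
  have fmXZ : FM (fun ω => (X (((p + k : ℕ) : ℤ) + 1) ω, Z (((p + k : ℕ) : ℤ) + 1) ω)) := fm_pair (fmX _) (fmZ _)
  have fmCMX : FM (fun ω => ((X (((p + k : ℕ) : ℤ) + 1) ω, Z (((p + k : ℕ) : ℤ) + 1) ω), (fun (j : Fin k) => (X ((p : ℤ) + 1 + ((j : ℕ) : ℤ)) ω, Y ((p : ℤ) + 1 + ((j : ℕ) : ℤ)) ω, Z ((p : ℤ) + 1 + ((j : ℕ) : ℤ)) ω)))) := fm_pair fmXZ fmCmW
  have fmCVX : FM (fun ω => (Z (((p + k : ℕ) : ℤ) + 1) ω, (fun (j : Fin k) => (Y ((p : ℤ) + 1 + ((j : ℕ) : ℤ)) ω, Z ((p : ℤ) + 1 + ((j : ℕ) : ℤ)) ω)))) := fm_pair (fmZ _) fmCmV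
  have fmFk : FM (fun ω (j : Fin (k + 1)) => (X ((p : ℤ) + 1 + ((j : ℕ) : ℤ)) ω, Y ((p : ℤ) + 1 + ((j : ℕ) : ℤ)) ω, Z ((p : ℤ) + 1 + ((j : ℕ) : ℤ)) ω)) := fm_pi (fun j => fm_pair (fmX _) (fm_pair (fmY _) (fmZ _)))
  have fmFm : FM (fun ω (j : Fin (k + 1)) => (X (-(k : ℤ) + ((j : ℕ) : ℤ)) ω, Y (-(k : ℤ) + ((j : ℕ) : ℤ)) ω, Z (-(k : ℤ) + ((j : ℕ) : ℤ)) ω)) := fm_pi (fun j => fm_pair (fmX _) (fm_pair (fmY _) (fmZ _)))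
  -- Markov property, normalized
  have hM1 : CondIndep μ (fun ω => (X (((p + k : ℕ) : ℤ) + 1) ω, Y (((p + k : ℕ) : ℤ) + 1) ω, Z (((p + k : ℕ) : ℤ) + 1) ω))
      (fun ω (j : Fin p) => (X (1 + ((j : ℕ) : ℤ)) ω, Y (1 + ((j : ℕ) : ℤ)) ω, Z (1 + ((j : ℕ) : ℤ)) ω)) (fun ω (j : Fin k) => (X ((p : ℤ) + 1 + ((j : ℕ) : ℤ)) ω, Y ((p : ℤ) + 1 + ((j : ℕ) : ℤ)) ω, Z ((p : ℤ) + 1 + ((j : ℕ) : ℤ)) ω)) := by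
    have h0 := hM ((((p + k : ℕ) : ℤ) + 1)) p
    have eB : (fun ω (j : Fin p) => (fun t ω => (X t ω, Y t ω, Z t ω)) ((((p + k : ℕ) : ℤ) + 1) - (k : ℤ) - (p : ℤ) + ((j : ℕ) : ℤ)) ω)
        = (fun ω (j : Fin p) => (X (1 + ((j : ℕ) : ℤ)) ω, Y (1 + ((j : ℕ) : ℤ)) ω, Z (1 + ((j : ℕ) : ℤ)) ω)) := by
      funext ω j
      exact appc (fun t ω => (X t ω, Y t ω, Z t ω)) (by have := j.isLt; omega) ω
    have eC : (fun ω (j : Fin k) => (fun t ω => (X t ω, Y t ω, Z t ω)) ((((p + k : ℕ) : ℤ) + 1) - (k : ℤ) + ((j : ℕ) : ℤ)) ω)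
        = (fun ω (j : Fin k) => (X ((p : ℤ) + 1 + ((j : ℕ) : ℤ)) ω, Y ((p : ℤ) + 1 + ((j : ℕ) : ℤ)) ω, Z ((p : ℤ) + 1 + ((j : ℕ) : ℤ)) ω)) := by
      funext ω j
      exact appc (fun t ω => (X t ω, Y t ω, Z t ω)) (by have := j.isLt; omega) ω
    rw [eB, eC] at h0
    exact h0
  have hYZ1 : CondIndep μ (fun ω => (Y (((p + k : ℕ) : ℤ) + 1) ω, Z (((p + k : ℕ) : ℤ) + 1) ω)) (fun ω (j : Fin p) => (Y (1 + ((j : ℕ) : ℤ)) ω, Z (1 + ((j : ℕ) : ℤ)) ω)) (fun ω (j : Fin k) => (Y ((p : ℤ) + 1 + ((j : ℕ) : ℤ)) ω, Z ((p : ℤ) + 1 + ((j : ℕ) : ℤ)) ω)) := by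
    have h0 := hYZ ((((p + k : ℕ) : ℤ) + 1)) p
    have eB : (fun ω (j : Fin p) => (fun t ω => (Y t ω, Z t ω)) ((((p + k : ℕ) : ℤ) + 1) - (k : ℤ) - (p : ℤ) + ((j : ℕ) : ℤ)) ω)
        = (fun ω (j : Fin p) => (Y (1 + ((j : ℕ) : ℤ)) ω, Z (1 + ((j : ℕ) : ℤ)) ω)) := by
      funext ω j
      exact appc (fun t ω => (Y t ω, Z t ω)) (by have := j.isLt; omega) ω
    have eC : (fun ω (j : Fin k) => (fun t ω => (Y t ω, Z t ω)) ((((p + k : ℕ) : ℤ) + 1) - (k : ℤ) + ((j : ℕ) : ℤ)) ω)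
        = (fun ω (j : Fin k) => (Y ((p : ℤ) + 1 + ((j : ℕ) : ℤ)) ω, Z ((p : ℤ) + 1 + ((j : ℕ) : ℤ)) ω)) := by
      funext ω j
      exact appc (fun t ω => (Y t ω, Z t ω)) (by have := j.isLt; omega) ω
    rw [eB, eC] at h0
    exact h0
  have hM2 : CondIndep μ (fun ω => (Y (((p + k : ℕ) : ℤ) + 1) ω, (X (((p + k : ℕ) : ℤ) + 1) ω, Z (((p + k : ℕ) : ℤ) + 1) ω)))
      (fun ω (j : Fin p) => (X (1 + ((j : ℕ) : ℤ)) ω, Y (1 + ((j : ℕ) : ℤ)) ω, Z (1 + ((j : ℕ) : ℤ)) ω)) (fun ω (j : Fin k) => (X ((p : ℤ) + 1 + ((j : ℕ) : ℤ)) ω, Y ((p : ℤ) + 1 + ((j : ℕ) : ℤ)) ω, Z ((p : ℤ) + 1 + ((j : ℕ) : ℤ)) ω)) :=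
    condIndep_left_inv (fun s : A × B × C => (s.2.1, (s.1, s.2.2)))
      (fun s : B × (A × C) => (s.2.1, s.1, s.2.2)) (fun ω => rfl) (fun ω => rfl) hM1
  have hM3 : CondIndep μ (Y (((p + k : ℕ) : ℤ) + 1)) (fun ω (j : Fin p) => (X (1 + ((j : ℕ) : ℤ)) ω, Y (1 + ((j : ℕ) : ℤ)) ω, Z (1 + ((j : ℕ) : ℤ)) ω)) (fun ω => ((X (((p + k : ℕ) : ℤ) + 1) ω, Z (((p + k : ℕ) : ℤ) + 1) ω), (fun (j : Fin k) => (X ((p : ℤ) + 1 + ((j : ℕ) : ℤ)) ω, Y ((p : ℤ) + 1 + ((j : ℕ) : ℤ)) ω, Z ((p : ℤ) + 1 + ((j : ℕ) : ℤ)) ω)))) :=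
    condIndep_weakUnion (fmY _) fmXZ fmBpW fmCmW hM2
  have hYZ3 : CondIndep μ (Y (((p + k : ℕ) : ℤ) + 1)) (fun ω (j : Fin p) => (Y (1 + ((j : ℕ) : ℤ)) ω, Z (1 + ((j : ℕ) : ℤ)) ω)) (fun ω => (Z (((p + k : ℕ) : ℤ) + 1) ω, (fun (j : Fin k) => (Y ((p : ℤ) + 1 + ((j : ℕ) : ℤ)) ω, Z ((p : ℤ) + 1 + ((j : ℕ) : ℤ)) ω)))) :=
    condIndep_weakUnion (fmY _) (fmZ _) fmBpV fmCmV hYZ1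
  have hdrop1 : entH μ (fun ω => (Y (((p + k : ℕ) : ℤ) + 1) ω, (fun (j : Fin p) => (X (1 + ((j : ℕ) : ℤ)) ω, Y (1 + ((j : ℕ) : ℤ)) ω, Z (1 + ((j : ℕ) : ℤ)) ω)), ((X (((p + k : ℕ) : ℤ) + 1) ω, Z (((p + k : ℕ) : ℤ) + 1) ω), (fun (j : Fin k) => (X ((p : ℤ) + 1 + ((j : ℕ) : ℤ)) ω, Y ((p : ℤ) + 1 + ((j : ℕ) : ℤ)) ω, Z ((p : ℤ) + 1 + ((j : ℕ) : ℤ)) ω))))) + entH μ (fun ω => ((X (((p + k : ℕ) : ℤ) + 1) ω, Z (((p + k : ℕ) : ℤ) + 1) ω), (fun (j : Fin k) => (X ((p : ℤ) + 1 + ((j : ℕ) : ℤ)) ω, Y ((p : ℤ) + 1 + ((j : ℕ) : ℤ)) ω, Z ((p : ℤ) + 1 + ((j : ℕ) : ℤ)) ω)))) = entH μ (fun ω => (Y (((p + k : ℕ) : ℤ) + 1) ω, ((X (((p + k : ℕ) : ℤ) + 1) ω, Z (((p + k : ℕ) : ℤ) + 1) ω), (fun (j : Fin k) => (X ((p : ℤ)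 + 1 + ((j : ℕ) : ℤ)) ω, Y ((p : ℤ) + 1 + ((j : ℕ) : ℤ)) ω, Z ((p : ℤ) + 1 + ((j : ℕ) : ℤ)) ω))))) + entH μ (fun ω => ((fun (j : Fin p) => (X (1 + ((j : ℕ) : ℤ)) ω, Y (1 + ((j : ℕ) : ℤ)) ω, Z (1 + ((j : ℕ) : ℤ)) ω)), ((X (((p + k : ℕ) : ℤ) + 1) ω, Z (((p + k : ℕ) : ℤ) + 1) ω), (fun (j : Fin k) => (X ((p : ℤ) + 1 + ((j : ℕ) : ℤ)) ω, Y ((p : ℤ) + 1 + ((j : ℕ) : ℤ)) ω, Z ((p : ℤ) + 1 + ((j : ℕ) : ℤ)) ω))))) :=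
    entH_drop (fmY _) fmBpW fmCMX hM3
  have hdrop2 : entH μ (fun ω => (Y (((p + k : ℕ) : ℤ) + 1) ω, (fun (j : Fin p) => (Y (1 + ((j : ℕ) : ℤ)) ω, Z (1 + ((j : ℕ) : ℤ)) ω)), (Z (((p + k : ℕ) : ℤ) + 1) ω, (fun (j : Fin k) => (Y ((p : ℤ) + 1 + ((j : ℕ) : ℤ)) ω, Z ((p : ℤ) + 1 + ((j : ℕ) : ℤ)) ω))))) + entH μ (fun ω => (Z (((p + k : ℕ) : ℤ) + 1) ω, (fun (j : Fin k) => (Y ((p : ℤ) + 1 + ((j : ℕ) : ℤ)) ω, Z ((p : ℤ) + 1 + ((j : ℕ) : ℤ)) ω)))) = entH μ (fun ω => (Y (((p + k : ℕ) : ℤ) + 1) ω, (Z (((p + k : ℕ) : ℤ) + 1) ω, (fun (j : Fin k) => (Y ((p : ℤ) + 1 + ((j : ℕ) : ℤ)) ω, Z ((p : ℤ) + 1 + ((j : ℕ) : ℤ)) ω))))) + entH μ (fun ω => ((fun (j : Fin p) => (Y (1 + ((j : ℕ) : ℤ)) ω, Z (1 + ((j : ℕ) : ℤ)) ω)), (Z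 (((p + k : ℕ) : ℤ) + 1) ω, (fun (j : Fin k) => (Y ((p : ℤ) + 1 + ((j : ℕ) : ℤ)) ω, Z ((p : ℤ) + 1 + ((j : ℕ) : ℤ)) ω))))) :=
    entH_drop (fmY _) fmBpV fmCVX hYZ3
  -- identifications of entropies
  have C1 : entH μ (fun ω => (Y (((p + k : ℕ) : ℤ) + 1) ω, (fun (j : Fin p) => (X (1 + ((j : ℕ) : ℤ)) ω, Y (1 + ((j : ℕ) : ℤ)) ω, Z (1 + ((j : ℕ) : ℤ)) ω)), ((X (((p + k : ℕ) : ℤ) + 1) ω, Z (((p + k : ℕ) : ℤ) + 1) ω), (fun (j : Fin k) => (X ((p : ℤ) + 1 + ((j : ℕ) : ℤ)) ω, Y ((p : ℤ) + 1 + ((j : ℕ) : ℤ)) ω, Z ((p : ℤ) + 1 + ((j : ℕ) : ℤ)) ω))))) = entH μ (fun ω => ((blkZ X 1 (p + k + 1) ω, Y (((p + k : ℕ) : ℤ) + 1) ω), (blkZ Y 1 (p + k) ω, blkZ Z 1 (p + k + 1) ω))) := by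
    refine entH_eq_of_inv (fun r => ((fun (j : Fin (p + k + 1)) => if h : (j : ℕ) < p then (r.2.1 ⟨(j : ℕ), h⟩).1 else if h2 : (j : ℕ) < p + k then (r.2.2.2 ⟨(j : ℕ) - p, by have := j.isLt; omega⟩).1 else r.2.2.1.1, r.1), (fun (j : Fin (p + k)) => if h : (j : ℕ) < p then (r.2.1 ⟨(j : ℕ), h⟩).2.1 else (r.2.2.2 ⟨(j : ℕ) - p, by have := j.isLt; omega⟩).2.1, fun (j : Fin (p + k + 1)) => if h : (j : ℕ) < p then (r.2.1 ⟨(j : ℕ), h⟩).2.2 else if h2 : (j : ℕ) < p + k then (r.2.2.2 ⟨(j : ℕ) - p, by have := j.isLt; omega⟩).2.2 else r.2.2.1.2))) (fun s => (s.1.2, (fun (j : Fin p) => (s.1.1 ⟨(j : ℕ), by have := j.isLt; omega⟩, s.2.1 ⟨(j : ℕ), by have := j.isLt; omega⟩, s.2.2 ⟨(j : ℕ), by have := j.isLt; omega⟩), ((s.1.1 ⟨p + k, by omega⟩, s.2.2 ⟨p + k, by omega⟩), fun (j : Fin k) => (s.1.1 ⟨p + (j : ℕ), by have := j.isLt; omega⟩,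 s.2.1 ⟨p + (j : ℕ), by have := j.isLt; omega⟩, s.2.2 ⟨p + (j : ℕ), by have := j.isLt; omega⟩))))) ?_ ?_ <;>
      (intro ω
       simp only [blkZ, Prod.mk.injEq]
       repeat' apply And.intro
       all_goals
       first
       | rfl
       | trivial
       | (exact appc _ (by omega) ω)
       | (funext j
          first
          | (split_ifs <;> exact appc _ (by have := j.isLt; omega) ω)
          | (simp only [Prod.mk.injEq]
             refine ⟨?_, ?_, ?_⟩ <;> exact appc _ (by have := j.isLt; omega) ω)
          | (simp only [Prod.mk.injEq]
             refine ⟨?_, ?_⟩ <;> exact appc _ (by have := j.isLt; omega) ω)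
          | (exact appc _ (by have := j.isLt; omega) ω)))
  have C2 : entH μ (fun ω => ((fun (j : Fin p) => (X (1 + ((j : ℕ) : ℤ)) ω, Y (1 + ((j : ℕ) : ℤ)) ω, Z (1 + ((j : ℕ) : ℤ)) ω)), ((X (((p + k : ℕ) : ℤ) + 1) ω, Z (((p + k : ℕ) : ℤ) + 1) ω), (fun (j : Fin k) => (X ((p : ℤ) + 1 + ((j : ℕ) : ℤ)) ω, Y ((p : ℤ) + 1 + ((j : ℕ) : ℤ)) ω, Z ((p : ℤ) + 1 + ((j : ℕ) : ℤ)) ω))))) = entH μ (fun ω => (blkZ X 1 (p + k + 1) ω, (blkZ Y 1 (p + k) ω, blkZ Z 1 (p + k + 1) ω))) := by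
    refine entH_eq_of_inv (fun r => (fun (j : Fin (p + k + 1)) => if h : (j : ℕ) < p then (r.1 ⟨(j : ℕ), h⟩).1 else if h2 : (j : ℕ) < p + k then (r.2.2 ⟨(j : ℕ) - p, by have := j.isLt; omega⟩).1 else r.2.1.1, (fun (j : Fin (p + k)) => if h : (j : ℕ) < p then (r.1 ⟨(j : ℕ), h⟩).2.1 else (r.2.2 ⟨(j : ℕ) - p, by have := j.isLt; omega⟩).2.1, fun (j : Fin (p + k + 1)) => if h : (j : ℕ) < p then (r.1 ⟨(j : ℕ), h⟩).2.2 else if h2 : (j : ℕ) < p + k then (r.2.2 ⟨(j : ℕ) - p, by have := j.isLt; omega⟩).2.2 else r.2.1.2))) (fun s => (fun (j : Fin p) => (s.1 ⟨(j : ℕ), by have := j.isLt; omega⟩, s.2.1 ⟨(j : ℕ), by have := j.isLt; omega⟩, s.2.2 ⟨(j : ℕ), by have := j.isLt; omega⟩), ((s.1 ⟨p + k, by omega⟩, s.2.2 ⟨p + k, by omega⟩), fun (j : Fin k) => (s.1 ⟨p + (j : ℕ), by have := j.isLt; omega⟩, s.2.1 ⟨p + (j : ℕ), by have := j.isLt;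 omega⟩, s.2.2 ⟨p + (j : ℕ), by have := j.isLt; omega⟩)))) ?_ ?_ <;>
      (intro ω
       simp only [blkZ, Prod.mk.injEq]
       repeat' apply And.intro
       all_goals
       first
       | rfl
       | trivial
       | (exact appc _ (by omega) ω)
       | (funext j
          first
          | (split_ifs <;> exact appc _ (by have := j.isLt; omega) ω)
          | (simp only [Prod.mk.injEq]
             refine ⟨?_, ?_, ?_⟩ <;> exact appc _ (by have := j.isLt; omega) ω)
          | (simp only [Prod.mk.injEq]
             refine ⟨?_, ?_⟩ <;> exact appc _ (by have := j.isLt; omega) ω)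
          | (exact appc _ (by have := j.isLt; omega) ω)))
  have C3 : entH μ (fun ω => (Y (((p + k : ℕ) : ℤ) + 1) ω, (fun (j : Fin p) => (Y (1 + ((j : ℕ) : ℤ)) ω, Z (1 + ((j : ℕ) : ℤ)) ω)), (Z (((p + k : ℕ) : ℤ) + 1) ω, (fun (j : Fin k) => (Y ((p : ℤ) + 1 + ((j : ℕ) : ℤ)) ω, Z ((p : ℤ) + 1 + ((j : ℕ) : ℤ)) ω))))) = entH μ (fun ω => (Y (((p + k : ℕ) : ℤ) + 1) ω, (blkZ Y 1 (p + k) ω, blkZ Z 1 (p + k + 1) ω))) := by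
    refine entH_eq_of_inv (fun r => (r.1, (fun (j : Fin (p + k)) => if h : (j : ℕ) < p then (r.2.1 ⟨(j : ℕ), h⟩).1 else (r.2.2.2 ⟨(j : ℕ) - p, by have := j.isLt; omega⟩).1, fun (j : Fin (p + k + 1)) => if h : (j : ℕ) < p then (r.2.1 ⟨(j : ℕ), h⟩).2 else if h2 : (j : ℕ) < p + k then (r.2.2.2 ⟨(j : ℕ) - p, by have := j.isLt; omega⟩).2 else r.2.2.1))) (fun s => (s.1, (fun (j : Fin p) => (s.2.1 ⟨(j : ℕ), by have := j.isLt; omega⟩, s.2.2 ⟨(j : ℕ), by have := j.isLt; omega⟩), (s.2.2 ⟨p + k, by omega⟩, fun (j : Fin k) => (s.2.1 ⟨p + (j : ℕ), by have := j.isLt; omega⟩, s.2.2 ⟨p + (j : ℕ), by have := j.isLt; omega⟩))))) ?_ ?_ <;>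
      (intro ω
       simp only [blkZ, Prod.mk.injEq]
       repeat' apply And.intro
       all_goals
       first
       | rfl
       | trivial
       | (exact appc _ (by omega) ω)
       | (funext j
          first
          | (split_ifs <;> exact appc _ (by have := j.isLt; omega) ω)
          | (simp only [Prod.mk.injEq]
             refine ⟨?_, ?_, ?_⟩ <;> exact appc _ (by have := j.isLt; omega) ω)
          | (simp only [Prod.mk.injEq]
             refine ⟨?_, ?_⟩ <;> exact appc _ (by have := j.isLt; omega) ω)
          | (exact appc _ (by have := j.isLt; omega) ω)))
  have C4 : entH μ (fun ω => ((fun (j : Fin p) => (Y (1 + ((j : ℕ) : ℤ)) ω, Z (1 + ((j : ℕ) : ℤ)) ω)), (Z (((p + k : ℕ) : ℤ) + 1) ω, (fun (j : Fin k) => (Y ((p : ℤ) + 1 + ((j : ℕ) : ℤ)) ω, Z ((p : ℤ) + 1 + ((j : ℕ) : ℤ)) ω))))) = entH μ (fun ω => (blkZ Y 1 (p + k) ω, blkZ Z 1 (p + k + 1) ω)) := by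
    refine entH_eq_of_inv (fun r => (fun (j : Fin (p + k)) => if h : (j : ℕ) < p then (r.1 ⟨(j : ℕ), h⟩).1 else (r.2.2 ⟨(j : ℕ) - p, by have := j.isLt; omega⟩).1, fun (j : Fin (p + k + 1)) => if h : (j : ℕ) < p then (r.1 ⟨(j : ℕ), h⟩).2 else if h2 : (j : ℕ) < p + k then (r.2.2 ⟨(j : ℕ) - p, by have := j.isLt; omega⟩).2 else r.2.1)) (fun s => (fun (j : Fin p) => (s.1 ⟨(j : ℕ), by have := j.isLt; omega⟩, s.2 ⟨(j : ℕ), by have := j.isLt; omega⟩), (s.2 ⟨p + k, by omega⟩, fun (j : Fin k) => (s.1 ⟨p + (j : ℕ), by have := j.isLt; omega⟩, s.2 ⟨p + (j : ℕ), by have := j.isLt; omega⟩)))) ?_ ?_ <;>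
      (intro ω
       simp only [blkZ, Prod.mk.injEq]
       repeat' apply And.intro
       all_goals
       first
       | rfl
       | trivial
       | (exact appc _ (by omega) ω)
       | (funext j
          first
          | (split_ifs <;> exact appc _ (by have := j.isLt; omega) ω)
          | (simp only [Prod.mk.injEq]
             refine ⟨?_, ?_, ?_⟩ <;> exact appc _ (by have := j.isLt; omega) ω)
          | (simp only [Prod.mk.injEq]
             refine ⟨?_, ?_⟩ <;> exact appc _ (by have := j.isLt; omega) ω)
          | (exact appc _ (by have := j.isLt; omega) ω)))
  have C5 : entH μ (fun ω => (Y (((p + k : ℕ) : ℤ) + 1) ω, ((X (((p + k : ℕ) : ℤ) + 1) ω, Z (((p + k : ℕ) : ℤ) + 1) ω), (fun (j : Fin k) => (X ((p : ℤ) + 1 + ((j : ℕ) : ℤ)) ω, Y ((p : ℤ) + 1 + ((j : ℕ) : ℤ)) ω, Z ((p : ℤ) + 1 + ((j : ℕ) : ℤ)) ω))))) = entH μ (fun ω => (fun (w : Fin (k + 1) → A × B × C) => (((w ⟨k, by omega⟩).2.1, fun (j : Fin (k + 1)) => (w j).1), (fun (j : Fin k) => (w ⟨(j : ℕ), by have :=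 j.isLt; omega⟩).2.1, fun (j : Fin (k + 1)) => (w j).2.2))) (fun (j : Fin (k + 1)) => (X ((p : ℤ) + 1 + ((j : ℕ) : ℤ)) ω, Y ((p : ℤ) + 1 + ((j : ℕ) : ℤ)) ω, Z ((p : ℤ) + 1 + ((j : ℕ) : ℤ)) ω))) := by
    refine entH_eq_of_inv (fun r => ((r.1, fun (j : Fin (k + 1)) => if h : (j : ℕ) < k then (r.2.2 ⟨(j : ℕ), h⟩).1 else r.2.1.1), (fun (j : Fin k) => (r.2.2 j).2.1, fun (j : Fin (k + 1)) => if h : (j : ℕ) < k then (r.2.2 ⟨(j : ℕ), h⟩).2.2 else r.2.1.2))) (fun s => (s.1.1, ((s.1.2 ⟨k, by omega⟩, s.2.2 ⟨k, by omega⟩), fun (j : Fin k) => (s.1.2 ⟨(j : ℕ), by have := j.isLt; omega⟩, s.2.1 j, s.2.2 ⟨(j : ℕ), by have := j.isLt; omega⟩)))) ?_ ?_ <;>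
      (intro ω
       simp only [blkZ, Prod.mk.injEq]
       repeat' apply And.intro
       all_goals
       first
       | rfl
       | trivial
       | (exact appc _ (by omega) ω)
       | (funext j
          first
          | (split_ifs <;> exact appc _ (by have := j.isLt; omega) ω)
          | (simp only [Prod.mk.injEq]
             refine ⟨?_, ?_, ?_⟩ <;> exact appc _ (by have := j.isLt; omega) ω)
          | (simp only [Prod.mk.injEq]
             refine ⟨?_, ?_⟩ <;> exact appc _ (by have := j.isLt; omega) ω)
          | (exact appc _ (by have := j.isLt; omega) ω)))
  have C6 : entH μ (fun ω => ((X (((p + k : ℕ) : ℤ) + 1) ω, Z (((p + k : ℕ) : ℤ) + 1) ω), (fun (j : Fin k) => (X ((p : ℤ) + 1 + ((j : ℕ) : ℤ)) ω, Y ((p : ℤ) + 1 + ((j : ℕ) : ℤ)) ω, Z ((p : ℤ) + 1 + ((j : ℕ) : ℤ)) ω)))) = entH μ (fun ω => (fun (w : Fin (k + 1) → A × B × C) => (fun (j : Fin (k + 1)) => (w j).1, (fun (j : Fin k) => (w ⟨(j : ℕ), by have := j.isLt; omega⟩).2.1, fun (j : Fin (k + 1)) => (w j).2.2))) (fun (j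 : Fin (k + 1)) => (X ((p : ℤ) + 1 + ((j : ℕ) : ℤ)) ω, Y ((p : ℤ) + 1 + ((j : ℕ) : ℤ)) ω, Z ((p : ℤ) + 1 + ((j : ℕ) : ℤ)) ω))) := by
    refine entH_eq_of_inv (fun r => (fun (j : Fin (k + 1)) => if h : (j : ℕ) < k then (r.2 ⟨(j : ℕ), h⟩).1 else r.1.1, (fun (j : Fin k) => (r.2 j).2.1, fun (j : Fin (k + 1)) => if h : (j : ℕ) < k then (r.2 ⟨(j : ℕ), h⟩).2.2 else r.1.2))) (fun s => ((s.1 ⟨k, by omega⟩, s.2.2 ⟨k, by omega⟩), fun (j : Fin k) => (s.1 ⟨(j : ℕ), by have := j.isLt; omega⟩, s.2.1 j, s.2.2 ⟨(j : ℕ), by have := j.isLt; omega⟩))) ?_ ?_ <;>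
      (intro ω
       simp only [blkZ, Prod.mk.injEq]
       repeat' apply And.intro
       all_goals
       first
       | rfl
       | trivial
       | (exact appc _ (by omega) ω)
       | (funext j
          first
          | (split_ifs <;> exact appc _ (by have := j.isLt; omega) ω)
          | (simp only [Prod.mk.injEq]
             refine ⟨?_, ?_, ?_⟩ <;> exact appc _ (by have := j.isLt; omega) ω)
          | (simp only [Prod.mk.injEq]
             refine ⟨?_, ?_⟩ <;> exact appc _ (by have := j.isLt; omega) ω)
          | (exact appc _ (by have := j.isLt; omega) ω)))
  have C7 : entH μ (fun ω => (Y (((p + k : ℕ) : ℤ) + 1) ω, (Z (((p + k : ℕ) : ℤ) + 1) ω, (fun (j : Fin k) => (Y ((p : ℤ) + 1 + ((j : ℕ) : ℤ)) ω, Z ((p : ℤ) + 1 + ((j : ℕ) : ℤ)) ω))))) = entH μ (fun ω => (fun (w : Fin (k + 1) → A × B × C) => ((w ⟨k, by omega⟩).2.1, (fun (j : Fin k) => (w ⟨(j : ℕ), by have := j.isLt; omega⟩).2.1, fun (j : Fin (k + 1)) => (w j).2.2))) (fun (j : Fin (k + 1)) => (X ((p : ℤ) + 1 + ((j : ℕ)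 : ℤ)) ω, Y ((p : ℤ) + 1 + ((j : ℕ) : ℤ)) ω, Z ((p : ℤ) + 1 + ((j : ℕ) : ℤ)) ω))) := by
    refine entH_eq_of_inv (fun r => (r.1, (fun (j : Fin k) => (r.2.2 j).1, fun (j : Fin (k + 1)) => if h : (j : ℕ) < k then (r.2.2 ⟨(j : ℕ), h⟩).2 else r.2.1))) (fun s => (s.1, (s.2.2 ⟨k, by omega⟩, fun (j : Fin k) => (s.2.1 j, s.2.2 ⟨(j : ℕ), by have := j.isLt; omega⟩)))) ?_ ?_ <;>
      (intro ω
       simp only [blkZ, Prod.mk.injEq]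
       repeat' apply And.intro
       all_goals
       first
       | rfl
       | trivial
       | (exact appc _ (by omega) ω)
       | (funext j
          first
          | (split_ifs <;> exact appc _ (by have := j.isLt; omega) ω)
          | (simp only [Prod.mk.injEq]
             refine ⟨?_, ?_, ?_⟩ <;> exact appc _ (by have := j.isLt; omega) ω)
          | (simp only [Prod.mk.injEq]
             refine ⟨?_, ?_⟩ <;> exact appc _ (by have := j.isLt; omega) ω)
          | (exact appc _ (by have := j.isLt; omega) ω)))
  have C8 : entH μ (fun ω => (Z (((p + k : ℕ) : ℤ) + 1) ω, (fun (j : Fin k) => (Y ((p : ℤ) + 1 + ((j : ℕ) : ℤ)) ω, Z ((p : ℤ) + 1 + ((j : ℕ) : ℤ)) ω)))) = entH μ (fun ω => (fun (w : Fin (k + 1) → A × B × C) => (fun (j : Fin k) => (w ⟨(j : ℕ), by have := j.isLt; omega⟩).2.1, fun (j : Fin (k + 1)) => (w j).2.2)) (fun (j : Fin (k + 1)) => (X ((p : ℤ) + 1 + ((j : ℕ) : ℤ)) ω, Y ((p : ℤ) + 1 + ((j : ℕ) : ℤ)) ω, Z ((p : ℤ) + 1 + ((j : ℕ) : ℤ))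 ω))) := by
    refine entH_eq_of_inv (fun r => (fun (j : Fin k) => (r.2 j).1, fun (j : Fin (k + 1)) => if h : (j : ℕ) < k then (r.2 ⟨(j : ℕ), h⟩).2 else r.1)) (fun s => (s.2 ⟨k, by omega⟩, fun (j : Fin k) => (s.1 j, s.2 ⟨(j : ℕ), by have := j.isLt; omega⟩))) ?_ ?_ <;>
      (intro ω
       simp only [blkZ, Prod.mk.injEq]
       repeat' apply And.intro
       all_goals
       first
       | rfl
       | trivial
       | (exact appc _ (by omega) ω)
       | (funext j
          first
          | (split_ifs <;> exact appc _ (by have := j.isLt; omega) ω)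
          | (simp only [Prod.mk.injEq]
             refine ⟨?_, ?_, ?_⟩ <;> exact appc _ (by have := j.isLt; omega) ω)
          | (simp only [Prod.mk.injEq]
             refine ⟨?_, ?_⟩ <;> exact appc _ (by have := j.isLt; omega) ω)
          | (exact appc _ (by have := j.isLt; omega) ω)))
  -- stationarity transfer
  have hpfk : ∀ w : Fin (k + 1) → A × B × C,
      pr μ ((fun ω (j : Fin (k + 1)) => (X ((p : ℤ) + 1 + ((j : ℕ) : ℤ)) ω, Y ((p : ℤ) + 1 + ((j : ℕ) : ℤ)) ω, Z ((p : ℤ) + 1 + ((j : ℕ) : ℤ)) ω)) ⁻¹' {w}) = pr μ ((fun ω (j : Fin (k + 1)) => (X (-(k : ℤ) + ((j : ℕ) : ℤ)) ω, Y (-(k : ℤ) + ((j : ℕ) : ℤ)) ω, Z (-(k : ℤ) + ((j : ℕ) : ℤ)) ω)) ⁻¹' {w}) := by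
    intro w
    have se : ∀ t : ℤ,
        ((fun ω (j : Fin (k + 1)) => (X (t + ((j : ℕ) : ℤ)) ω, Y (t + ((j : ℕ) : ℤ)) ω,
            Z (t + ((j : ℕ) : ℤ)) ω)) ⁻¹' {w})
          = {ω | ∀ j : Fin (k + 1), (fun t ω => (X t ω, Y t ω, Z t ω)) (t + ((j : ℕ) : ℤ)) ω = w j} := by
      intro t; ext ω
      simp only [Set.mem_preimage, Set.mem_singleton_iff, Set.mem_setOf_eq, funext_iff]
    have h1 := hstat (k + 1) ((p : ℤ) + 1) w
    have h2 := hstat (k + 1) (-(k : ℤ)) w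
    rw [se ((p : ℤ) + 1), se (-(k : ℤ)), h1, h2]
  have Tr1 : entH μ (fun ω => (fun (w : Fin (k + 1) → A × B × C) => (fun (j : Fin (k + 1)) => (w j).1, (fun (j : Fin k) => (w ⟨(j : ℕ), by have := j.isLt; omega⟩).2.1, fun (j : Fin (k + 1)) => (w j).2.2))) (fun (j : Fin (k + 1)) => (X ((p : ℤ) + 1 + ((j : ℕ) : ℤ)) ω, Y ((p : ℤ) + 1 + ((j : ℕ) : ℤ)) ω, Z ((p : ℤ) + 1 + ((j : ℕ) : ℤ)) ω))) = entH μ (fun ω => (fun (w : Fin (k + 1) → A × B × C) => (fun (j : Fin (k + 1)) => (w j).1, (fun (j : Fin k) => (w ⟨(j : ℕ), by have := j.isLt; omega⟩).2.1, fun (j : Fin (k + 1)) => (w j).2.2))) (fun (j : Fin (k + 1)) => (X (-(k : ℤ) + ((j : ℕ) : ℤ)) ω, Y (-(k : ℤ) + ((j : ℕ) : ℤ)) ω, Z (-(k : ℤ) + ((j : ℕ) : ℤ)) ω))) := entH_transfer fmFk fmFm hpfk (fun (w : Fin (k + 1) → A × B × C) => (fun (j : Fin (k + 1)) => (w j).1,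 (fun (j : Fin k) => (w ⟨(j : ℕ), by have := j.isLt; omega⟩).2.1, fun (j : Fin (k + 1)) => (w j).2.2)))
  have TrY : entH μ (fun ω => (fun (w : Fin (k + 1) → A × B × C) => ((w ⟨k, by omega⟩).2.1, (fun (j : Fin k) => (w ⟨(j : ℕ), by have := j.isLt; omega⟩).2.1, fun (j : Fin (k + 1)) => (w j).2.2))) (fun (j : Fin (k + 1)) => (X ((p : ℤ) + 1 + ((j : ℕ) : ℤ)) ω, Y ((p : ℤ) + 1 + ((j : ℕ) : ℤ)) ω, Z ((p : ℤ) + 1 + ((j : ℕ) : ℤ)) ω))) = entH μ (fun ω => (fun (w : Fin (k + 1) → A × B × C) => ((w ⟨k, by omega⟩).2.1, (fun (j : Fin k) => (w ⟨(j : ℕ), by have := j.isLt; omega⟩).2.1, fun (j : Fin (k + 1)) => (w j).2.2))) (fun (j : Fin (k + 1)) => (X (-(k : ℤ) + ((j : ℕ) : ℤ)) ω, Y (-(k : ℤ) + ((j : ℕ) : ℤ)) ω, Z (-(k : ℤ) + ((j : ℕ) : ℤ)) ω))) := entH_transfer fmFk fmFm hpfk (fun (w : Fin (k + 1) → A ×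 B × C) => ((w ⟨k, by omega⟩).2.1, (fun (j : Fin k) => (w ⟨(j : ℕ), by have := j.isLt; omega⟩).2.1, fun (j : Fin (k + 1)) => (w j).2.2)))
  have TrXY : entH μ (fun ω => (fun (w : Fin (k + 1) → A × B × C) => (((w ⟨k, by omega⟩).2.1, fun (j : Fin (k + 1)) => (w j).1), (fun (j : Fin k) => (w ⟨(j : ℕ), by have := j.isLt; omega⟩).2.1, fun (j : Fin (k + 1)) => (w j).2.2))) (fun (j : Fin (k + 1)) => (X ((p : ℤ) + 1 + ((j : ℕ) : ℤ)) ω, Y ((p : ℤ) + 1 + ((j : ℕ) : ℤ)) ω, Z ((p : ℤ) + 1 + ((j : ℕ) : ℤ)) ω))) = entH μ (fun ω => (fun (w : Fin (k + 1) → A × B × C) => (((w ⟨k, by omega⟩).2.1, fun (j : Fin (k + 1)) => (w j).1), (fun (j : Fin k) => (w ⟨(j : ℕ), by have := j.isLt; omega⟩).2.1, fun (j : Fin (k + 1)) => (w j).2.2))) (fun (j : Fin (k + 1)) => (X (-(k : ℤ) + ((j : ℕ) : ℤ)) ω, Y (-(k : ℤ) + ((j : ℕ) : ℤ)) ω, Z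 (-(k : ℤ) + ((j : ℕ) : ℤ)) ω))) := entH_transfer fmFk fmFm hpfk (fun (w : Fin (k + 1) → A × B × C) => (((w ⟨k, by omega⟩).2.1, fun (j : Fin (k + 1)) => (w j).1), (fun (j : Fin k) => (w ⟨(j : ℕ), by have := j.isLt; omega⟩).2.1, fun (j : Fin (k + 1)) => (w j).2.2)))
  have TrC : entH μ (fun ω => (fun (w : Fin (k + 1) → A × B × C) => (fun (j : Fin k) => (w ⟨(j : ℕ), by have := j.isLt; omega⟩).2.1, fun (j : Fin (k + 1)) => (w j).2.2)) (fun (j : Fin (k + 1)) => (X ((p : ℤ) + 1 + ((j : ℕ) : ℤ)) ω, Y ((p : ℤ) + 1 + ((j : ℕ) : ℤ)) ω, Z ((p : ℤ) + 1 + ((j : ℕ) : ℤ)) ω))) = entH μ (fun ω => (fun (w : Fin (k + 1) → A × B × C) => (fun (j : Fin k) => (w ⟨(j : ℕ), by have := j.isLt; omega⟩).2.1, fun (j : Fin (k + 1)) => (w j).2.2)) (fun (j : Fin (k + 1)) => (X (-(k : ℤ) + ((j : ℕ) : ℤ)) ω, Y (-(k : ℤ) + ((j : ℕ) : ℤ))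 ω, Z (-(k : ℤ) + ((j : ℕ) : ℤ)) ω))) := entH_transfer fmFk fmFm hpfk (fun (w : Fin (k + 1) → A × B × C) => (fun (j : Fin k) => (w ⟨(j : ℕ), by have := j.isLt; omega⟩).2.1, fun (j : Fin (k + 1)) => (w j).2.2))
  -- c-side identifications
  have C9 : entH μ (fun ω => (fun (w : Fin (k + 1) → A × B × C) => (fun (j : Fin (k + 1)) => (w j).1, (fun (j : Fin k) => (w ⟨(j : ℕ), by have := j.isLt; omega⟩).2.1, fun (j : Fin (k + 1)) => (w j).2.2))) (fun (j : Fin (k + 1)) => (X (-(k : ℤ) + ((j : ℕ) : ℤ)) ω, Y (-(k : ℤ) + ((j : ℕ) : ℤ)) ω, Z (-(k : ℤ) + ((j : ℕ) : ℤ)) ω))) = entH μ (fun ω => (blkZ X (-(k : ℤ)) (k + 1) ω, (blkZ Y (-(k : ℤ)) k ω, blkZ Z (-(k : ℤ)) (k + 1) ω))) := by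
    have e : (fun ω => (fun (w : Fin (k + 1) → A × B × C) => (fun (j : Fin (k + 1)) => (w j).1, (fun (j : Fin k) => (w ⟨(j : ℕ), by have := j.isLt; omega⟩).2.1, fun (j : Fin (k + 1)) => (w j).2.2))) (fun (j : Fin (k + 1)) => (X (-(k : ℤ) + ((j : ℕ) : ℤ)) ω, Y (-(k : ℤ) + ((j : ℕ) : ℤ)) ω, Z (-(k : ℤ) + ((j : ℕ) : ℤ)) ω))) = (fun ω => (blkZ X (-(k : ℤ)) (k + 1) ω, (blkZ Y (-(k : ℤ)) k ω, blkZ Z (-(k : ℤ)) (k + 1) ω))) := by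
      funext ω
      simp only [blkZ, Prod.mk.injEq]
      repeat' apply And.intro
      all_goals
      first
      | rfl
      | trivial
      | (exact appc _ (by omega) ω)
      | (funext j
         first
         | (split_ifs <;> exact appc _ (by have := j.isLt; omega) ω)
         | (simp only [Prod.mk.injEq]
            refine ⟨?_, ?_, ?_⟩ <;> exact appc _ (by have := j.isLt; omega) ω)
         | (simp only [Prod.mk.injEq]
            refine ⟨?_, ?_⟩ <;> exact appc _ (by have := j.isLt; omega) ω)
         | (exact appc _ (by have := j.isLt; omega) ω))
    rw [e]
  have C10 : entH μ (fun ω => (fun (w : Fin (k + 1) → A × B × C) => ((w ⟨k, by omega⟩).2.1, (fun (j : Fin k) => (w ⟨(j : ℕ), by have := j.isLt; omega⟩).2.1, fun (j : Fin (k + 1)) => (w j).2.2))) (fun (j : Fin (k + 1)) => (X (-(k : ℤ) + ((j : ℕ) : ℤ)) ω, Y (-(k : ℤ) + ((j : ℕ) : ℤ)) ω, Z (-(k : ℤ) + ((j : ℕ) : ℤ)) ω))) = entH μ (fun ω => (Y 0 ω, (blkZ Y (-(k : ℤ)) k ω, blkZ Z (-(k : ℤ)) (k + 1) ω))) := by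
    have e : (fun ω => (fun (w : Fin (k + 1) → A × B × C) => ((w ⟨k, by omega⟩).2.1, (fun (j : Fin k) => (w ⟨(j : ℕ), by have := j.isLt; omega⟩).2.1, fun (j : Fin (k + 1)) => (w j).2.2))) (fun (j : Fin (k + 1)) => (X (-(k : ℤ) + ((j : ℕ) : ℤ)) ω, Y (-(k : ℤ) + ((j : ℕ) : ℤ)) ω, Z (-(k : ℤ) + ((j : ℕ) : ℤ)) ω))) = (fun ω => (Y 0 ω, (blkZ Y (-(k : ℤ)) k ω, blkZ Z (-(k : ℤ)) (k + 1) ω))) := by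
      funext ω
      simp only [blkZ, Prod.mk.injEq]
      repeat' apply And.intro
      all_goals
      first
      | rfl
      | trivial
      | (exact appc _ (by omega) ω)
      | (funext j
         first
         | (split_ifs <;> exact appc _ (by have := j.isLt; omega) ω)
         | (simp only [Prod.mk.injEq]
            refine ⟨?_, ?_, ?_⟩ <;> exact appc _ (by have := j.isLt; omega) ω)
         | (simp only [Prod.mk.injEq]
            refine ⟨?_, ?_⟩ <;> exact appc _ (by have := j.isLt; omega) ω)
         | (exact appc _ (by have := j.isLt; omega) ω))
    rw [e]
  have C11 : entH μ (fun ω => (fun (w : Fin (k + 1) → A × B × C) => (((w ⟨k, by omega⟩).2.1, fun (j : Fin (k + 1)) => (w j).1), (fun (j : Fin k) => (w ⟨(j : ℕ), by have := j.isLt; omega⟩).2.1, fun (j : Fin (k + 1)) => (w j).2.2))) (fun (j : Fin (k + 1)) => (X (-(k : ℤ) + ((j : ℕ) : ℤ)) ω, Y (-(k : ℤ) + ((j : ℕ) : ℤ)) ω, Z (-(k : ℤ) + ((j : ℕ) : ℤ)) ω))) = entH μ (fun ω => ((Y 0 ω, blkZ X (-(k : ℤ)) (k + 1) ω), (blkZ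 Y (-(k : ℤ)) k ω, blkZ Z (-(k : ℤ)) (k + 1) ω))) := by
    have e : (fun ω => (fun (w : Fin (k + 1) → A × B × C) => (((w ⟨k, by omega⟩).2.1, fun (j : Fin (k + 1)) => (w j).1), (fun (j : Fin k) => (w ⟨(j : ℕ), by have := j.isLt; omega⟩).2.1, fun (j : Fin (k + 1)) => (w j).2.2))) (fun (j : Fin (k + 1)) => (X (-(k : ℤ) + ((j : ℕ) : ℤ)) ω, Y (-(k : ℤ) + ((j : ℕ) : ℤ)) ω, Z (-(k : ℤ) + ((j : ℕ) : ℤ)) ω))) = (fun ω => ((Y 0 ω, blkZ X (-(k : ℤ)) (k + 1) ω), (blkZ Y (-(k : ℤ)) k ω, blkZ Z (-(k : ℤ)) (k + 1) ω))) := by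
      funext ω
      simp only [blkZ, Prod.mk.injEq]
      repeat' apply And.intro
      all_goals
      first
      | rfl
      | trivial
      | (exact appc _ (by omega) ω)
      | (funext j
         first
         | (split_ifs <;> exact appc _ (by have := j.isLt; omega) ω)
         | (simp only [Prod.mk.injEq]
            refine ⟨?_, ?_, ?_⟩ <;> exact appc _ (by have := j.isLt; omega) ω)
         | (simp only [Prod.mk.injEq]
            refine ⟨?_, ?_⟩ <;> exact appc _ (by have := j.isLt; omega) ω)
         | (exact appc _ (by have := j.isLt; omega) ω))
    rw [e]
  have C12 : entH μ (fun ω => (fun (w : Fin (k + 1) → A × B × C) => (fun (j : Fin k) => (w ⟨(j : ℕ), by have := j.isLt; omega⟩).2.1, fun (j : Fin (k + 1)) => (w j).2.2)) (fun (j : Fin (k + 1)) => (X (-(k : ℤ) + ((j : ℕ) : ℤ)) ω, Y (-(k : ℤ) + ((j : ℕ) : ℤ)) ω, Z (-(k : ℤ) + ((j : ℕ) : ℤ)) ω))) = entH μ (fun ω => (blkZ Y (-(k : ℤ)) k ω, blkZ Z (-(k : ℤ)) (k + 1) ω)) := by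
    have e : (fun ω => (fun (w : Fin (k + 1) → A × B × C) => (fun (j : Fin k) => (w ⟨(j : ℕ), by have := j.isLt; omega⟩).2.1, fun (j : Fin (k + 1)) => (w j).2.2)) (fun (j : Fin (k + 1)) => (X (-(k : ℤ) + ((j : ℕ) : ℤ)) ω, Y (-(k : ℤ) + ((j : ℕ) : ℤ)) ω, Z (-(k : ℤ) + ((j : ℕ) : ℤ)) ω))) = (fun ω => (blkZ Y (-(k : ℤ)) k ω, blkZ Z (-(k : ℤ)) (k + 1) ω)) := by
      funext ω
      simp only [blkZ, Prod.mk.injEq]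
      repeat' apply And.intro
      all_goals
      first
      | rfl
      | trivial
      | (exact appc _ (by omega) ω)
      | (funext j
         first
         | (split_ifs <;> exact appc _ (by have := j.isLt; omega) ω)
         | (simp only [Prod.mk.injEq]
            refine ⟨?_, ?_, ?_⟩ <;> exact appc _ (by have := j.isLt; omega) ω)
         | (simp only [Prod.mk.injEq]
            refine ⟨?_, ?_⟩ <;> exact appc _ (by have := j.isLt; omega) ω)
         | (exact appc _ (by have := j.isLt; omega) ω))
    rw [e]
  simp only [cmi, condH]
  linarith [hdrop1, hdrop2, C1, C2, C3, C4, C5, C6, C7, C8, C9, C10, C11, C12, Tr1, TrY, TrXY, TrC]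


end TermEq

/-- If `{(X_n,Y_n,Z_n)}` is a stationary Markov chain of order at most
`k ≥ 1` and `{(Y_n,Z_n)}` is also Markov of order at most `k`, then the CCDI rate equals
`I(Y_0 ; X_{-k}^0 | Y_{-k}^{-1}, Z_{-k}^0)`. -/
theorem ccdiRate_eq_cmi_of_stationary_markov
    {Ω A B C : Type*} [MeasurableSpace Ω]
    [MeasurableSpace A] [MeasurableSpace B] [MeasurableSpace C]
    [Fintype A] [Fintype B] [Fintype C]
    [MeasurableSingletonClass A] [MeasurableSingletonClass B] [MeasurableSingletonClass C]
    (μ : Measure Ω) [IsProbabilityMeasure μ]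
    (X : ℤ → Ω → A) (Y : ℤ → Ω → B) (Z : ℤ → Ω → C)
    (hX : ∀ t, Measurable (X t)) (hY : ∀ t, Measurable (Y t)) (hZ : ∀ t, Measurable (Z t))
    (k : ℕ) (hk : 1 ≤ k)
    (hstat : Stationary μ (fun t ω => (X t ω, Y t ω, Z t ω)))
    (hM : MarkovOrder μ (fun t ω => (X t ω, Y t ω, Z t ω)) k)
    (hYZ : MarkovOrder μ (fun t ω => (Y t ω, Z t ω)) k) :
    Tendsto (fun n : ℕ => (1 / (n : ℝ)) * ccdiZ μ X Y Z n) atTop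
      (𝓝 (cmi μ (Y 0) (blkZ X (-(k : ℤ)) (k + 1))
        (fun ω => (blkZ Y (-(k : ℤ)) k ω, blkZ Z (-(k : ℤ)) (k + 1) ω)))) := by
  have key : ∀ i : ℕ, k ≤ i →
      cmi μ (blkZ X 1 (i + 1)) (Y ((i : ℤ) + 1)) (fun ω => (blkZ Y 1 i ω, blkZ Z 1 (i + 1) ω)) = cmi μ (Y 0) (blkZ X (-(k : ℤ)) (k + 1)) (fun ω => (blkZ Y (-(k : ℤ)) k ω, blkZ Z (-(k : ℤ)) (k + 1) ω)) :=
    fun i hik => termEq μ X Y Z hX hY hZ k hstat hM hYZ i hik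
  have hccdi : ∀ n : ℕ, k ≤ n → ccdiZ μ X Y Z n
      = (∑ i ∈ Finset.range k, (cmi μ (blkZ X 1 (i + 1)) (Y ((i : ℤ) + 1)) (fun ω => (blkZ Y 1 i ω, blkZ Z 1 (i + 1) ω)) - cmi μ (Y 0) (blkZ X (-(k : ℤ)) (k + 1)) (fun ω => (blkZ Y (-(k : ℤ)) k ω, blkZ Z (-(k : ℤ)) (k + 1) ω)))) + (n : ℝ) * (cmi μ (Y 0) (blkZ X (-(k : ℤ)) (k + 1)) (fun ω => (blkZ Y (-(k : ℤ)) k ω, blkZ Z (-(k : ℤ)) (k + 1) ω))) := by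
    intro n hn
    simp only [ccdiZ]
    have e1 : (∑ i ∈ Finset.range n, cmi μ (blkZ X 1 (i + 1)) (Y ((i : ℤ) + 1)) (fun ω => (blkZ Y 1 i ω, blkZ Z 1 (i + 1) ω)))
        = ∑ i ∈ Finset.range n, ((cmi μ (blkZ X 1 (i + 1)) (Y ((i : ℤ) + 1)) (fun ω => (blkZ Y 1 i ω, blkZ Z 1 (i + 1) ω)) - cmi μ (Y 0) (blkZ X (-(k : ℤ)) (k + 1)) (fun ω => (blkZ Y (-(k : ℤ)) k ω, blkZ Z (-(k : ℤ)) (k + 1) ω))) + (cmi μ (Y 0) (blkZ X (-(k : ℤ)) (k + 1)) (fun ω => (blkZ Y (-(k : ℤ)) k ω, blkZ Z (-(k : ℤ)) (k + 1) ω)))) :=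
      Finset.sum_congr rfl (fun i _ => by ring)
    rw [e1, Finset.sum_add_distrib, Finset.sum_const, Finset.card_range, nsmul_eq_mul]
    congr 1
    refine (Finset.sum_subset (Finset.range_subset_range.2 hn) ?_).symm
    intro i hi hnot
    rw [key i (by simp only [Finset.mem_range, not_lt] at hnot; exact hnot)]
    ring
  have hone : Tendsto (fun n : ℕ => (1 : ℝ) / (n : ℝ)) atTop (𝓝 0) :=
    tendsto_one_div_atTop_nhds_zero_nat
  have hlim : Tendsto (fun n : ℕ =>
      (∑ i ∈ Finset.range k, (cmi μ (blkZ X 1 (i + 1)) (Y ((i : ℤ) + 1)) (fun ω => (blkZ Y 1 i ω, blkZ Z 1 (i + 1) ω)) - cmi μ (Y 0) (blkZ X (-(k : ℤ)) (k + 1)) (fun ω => (blkZ Y (-(k : ℤ)) k ω, blkZ Z (-(k : ℤ)) (k + 1) ω)))) * ((1 : ℝ) / (n : ℝ)) + (cmi μ (Y 0) (blkZ X (-(k : ℤ)) (k + 1)) (fun ω => (blkZ Y (-(k : ℤ)) k ω, blkZ Z (-(k : ℤ)) (k + 1) ω)))) atTop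
      (𝓝 (cmi μ (Y 0) (blkZ X (-(k : ℤ)) (k + 1)) (fun ω => (blkZ Y (-(k : ℤ)) k ω, blkZ Z (-(k : ℤ)) (k + 1) ω)))) := by
    have h2 := (hone.const_mul (∑ i ∈ Finset.range k, (cmi μ (blkZ X 1 (i + 1)) (Y ((i : ℤ) + 1)) (fun ω => (blkZ Y 1 i ω, blkZ Z 1 (i + 1) ω)) - cmi μ (Y 0) (blkZ X (-(k : ℤ)) (k + 1)) (fun ω => (blkZ Y (-(k : ℤ)) k ω, blkZ Z (-(k : ℤ)) (k + 1) ω))))).add_const (cmi μ (Y 0) (blkZ X (-(k : ℤ)) (k + 1)) (fun ω => (blkZ Y (-(k : ℤ)) k ω, blkZ Z (-(k : ℤ)) (k + 1) ω)))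
    simpa using h2
  refine hlim.congr' ?_
  filter_upwards [Filter.eventually_ge_atTop k, Filter.eventually_ge_atTop 1] with n hkn h1n
  rw [hccdi n hkn]
  have hnz : (n : ℝ) ≠ 0 := by
    have h0 : (0 : ℕ) < n := h1n
    exact_mod_cast h0.ne'
  field_simp


end CCDI
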